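/- arXiv:2207.13562 — 5 statements merged into one kernel-verified Lean document; each statement's English description precedes it below -/
import Mathlib

section
/- Let F be a field of characteristic different from 2, T a finite group, σ : T × T → Fˣ a 2-cocycle, and let A be a twisted group algebra F^σT with basis (X_u)_{u∈T}. Suppose τ : T → T is an anti-automorphism with τ∘τ = id and μ : T → Fˣ satisfies σ(u,v) = μ(u)·μ(v)·μ(uv)⁻¹·σ(τ(v),τ(u)) for all u,v ∈ T and μ(u·τ(u)) = 1 for all u ∈ T. Then the F-linear map ι : A → A determined by ι(X_u) = μ(u) • X_{τ(u)} satisfies ι(x·y) = ι(y)·ι(x) for all x,y ∈ A and ι(ι(x)) = x for all x ∈ A; in particular, ι is an involution of A with ι(X_u) ∈ F • X_{τ(u)} for all u ∈ T. -/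
/-!
Both identities are linear (resp. bilinear) in their arguments, so it suffices to check them on
the basis. On basis elements, anti-multiplicativity says
`σ(u,v) μ(uv) = μ(v) μ(u) σ(τv,τu)`, which is the compatibility condition, and `ι ∘ ι = id`
says `μ(u) μ(τu) = 1`, which is the compatibility condition at `(u, τu)` combined with
`μ(u τu) = 1`.
-/

theorem LinearMap.map_mul_rev_of_basis {R A B ι : Type*} [CommSemiring R] [Semiring A]
    [Semiring B] [Algebra R A] [Algebra R B] (b : Module.Basis ι R A) (f : A →ₗ[R] B)
    (h : ∀ i j, f (b i * b j) = f (b j) * f (b i)) (x y : A) :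
    f (x * y) = f y * f x := by
  have hbil : (LinearMap.mul R A).compr₂ f = (LinearMap.mul R B).flip.compl₁₂ f f :=
    LinearMap.ext_basis b b h
  exact LinearMap.congr_fun₂ hbil x y

theorem mul_apply_eq_one_of_cocycle_compat {T G : Type*} [Group T] [CommGroup G]
    {σ : T → T → G} {τ : T → T} (hτ : Function.Involutive τ) {μ : T → G}
    (hco : ∀ u v : T, σ u v = μ u * μ v * (μ (u * v))⁻¹ * σ (τ v) (τ u))
    (hμ1 : ∀ u : T, μ (u * τ u) = 1) (u : T) :
    μ u * μ (τ u) = 1 := by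
  have h := hco u (τ u)
  rw [hμ1 u, hτ u, inv_one, mul_one] at h
  exact mul_eq_right.mp h.symm

section TwistedGroupAlgebra

variable {F T A : Type*} [CommSemiring F] [Semiring A] [Algebra F A]
  {τ : T → T} {μ : T → Fˣ} {ι : A →ₗ[F] A}

theorem twisted_map_basis_mul_rev [Group T] {σ : T → T → Fˣ} {X : T → A}
    (hX : ∀ u v : T, X u * X v = (σ u v : F) • X (u * v))
    (hτanti : ∀ u v : T, τ (u * v) = τ v * τ u)
    (hco : ∀ u v : T, σ u v = μ u * μ v * (μ (u * v))⁻¹ * σ (τ v) (τ u))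
    (hι : ∀ u : T, ι (X u) = (μ u : F) • X (τ u)) (u v : T) :
    ι (X u * X v) = ι (X v) * ι (X u) := by
  have hscalar : σ u v * μ (u * v) = μ v * μ u * σ (τ v) (τ u) := by
    rw [hco u v, mul_right_comm _ (σ (τ v) (τ u)), inv_mul_cancel_right, mul_comm (μ u)]
  rw [hX, map_smul, hι, hτanti, hι, hι, smul_mul_smul_comm, hX, smul_smul, smul_smul,
    ← Units.val_mul, ← Units.val_mul, ← Units.val_mul, hscalar]

theorem twisted_map_comp_self {X : Module.Basis T F A} (hτ : Function.Involutive τ)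
    (hμ : ∀ u : T, μ u * μ (τ u) = 1)
    (hι : ∀ u : T, ι (X u) = (μ u : F) • X (τ u)) :
    ι ∘ₗ ι = LinearMap.id :=
  X.ext fun u => by
    rw [LinearMap.comp_apply, hι, map_smul, hι, hτ u, smul_smul, ← Units.val_mul,
      hμ u, Units.val_one, one_smul, LinearMap.id_apply]

end TwistedGroupAlgebra

theorem homogeneous_involution_exists_general {F : Type*} [Field F]
    {T : Type*} [Group T]
    {A : Type*} [Ring A] [Algebra F A]
    (σ : T → T → Fˣ)
    (X : Module.Basis T F A)
    (hX : ∀ u v : T, X u * X v = (σ u v : F) • X (u * v))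
    (τ : T → T) (hτanti : ∀ u v : T, τ (u * v) = τ v * τ u)
    (hτ2 : τ ∘ τ = id)
    (μ : T → Fˣ)
    (hco : ∀ u v : T, σ u v = μ u * μ v * (μ (u * v))⁻¹ * σ (τ v) (τ u))
    (hμ1 : ∀ u : T, μ (u * τ u) = 1)
    (ι : A →ₗ[F] A)
    (hι : ∀ u : T, ι (X u) = (μ u : F) • X (τ u)) :
    (∀ x y : A, ι (x * y) = ι y * ι x) ∧ (∀ x : A, ι (ι x) = x) ∧
      (∀ u : T, ∃ c : F, ι (X u) = c • X (τ u)) := by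
  have hτ : Function.Involutive τ := congrFun hτ2
  have hμ := mul_apply_eq_one_of_cocycle_compat hτ hco hμ1
  refine ⟨ι.map_mul_rev_of_basis X (twisted_map_basis_mul_rev hX hτanti hco hι), ?_,
    fun u => ⟨μ u, hι u⟩⟩
  exact LinearMap.congr_fun (twisted_map_comp_self hτ hμ hι)

/-- If (σ,τ) is a compatible pair (witnessed by μ), then the F-linear map ι on
the twisted group algebra F^σT determined by ι(X_u) = μ(u) • X_{τ(u)} is an
involution, and it sends X_u into F • X_{τ(u)}. -/
theorem homogeneous_involution_exists {F : Type*} [Field F]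
    (hchar : (2 : F) ≠ 0)
    {T : Type*} [Group T] [Fintype T]
    {A : Type*} [Ring A] [Algebra F A]
    (σ : T → T → Fˣ)
    (hσ : ∀ u v w : T, σ u v * σ (u * v) w = σ u (v * w) * σ v w)
    (X : Module.Basis T F A)
    (hX : ∀ u v : T, X u * X v = (σ u v : F) • X (u * v))
    (τ : T → T) (hτanti : ∀ u v : T, τ (u * v) = τ v * τ u)
    (hτ2 : τ ∘ τ = id)
    (μ : T → Fˣ)
    (hco : ∀ u v : T, σ u v = μ u * μ v * (μ (u * v))⁻¹ * σ (τ v) (τ u))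
    (hμ1 : ∀ u : T, μ (u * τ u) = 1)
    (ι : A →ₗ[F] A)
    (hι : ∀ u : T, ι (X u) = (μ u : F) • X (τ u)) :
    (∀ x y : A, ι (x * y) = ι y * ι x) ∧ (∀ x : A, ι (ι x) = x) ∧
      (∀ u : T, ∃ c : F, ι (X u) = c • X (τ u)) :=
  homogeneous_involution_exists_general σ X hX τ hτanti hτ2 μ hco hμ1 ι hι
end

section
/- Let F be a field of characteristic different from 2, T a finite group, σ : T × T → Fˣ a 2-cocycle, A a twisted group algebra F^σT with basis (X_u)_{u∈T}, and τ : T → T a map. Suppose ι : A → A is an F-linear map with ι(x·y) = ι(y)·ι(x) and ι(ι(x)) = x for all x,y ∈ A, such that ι(X_u) lies in the F-span of X_{τ(u)} for every u ∈ T. Then τ is an anti-automorphism of T with τ∘τ = id, and there exists μ : T → Fˣ such that ι(X_u) = μ(u) • X_{τ(u)} for all u, σ(u,v) = μ(u)·μ(v)·μ(uv)⁻¹·σ(τ(v),τ(u)) for all u,v ∈ T, and μ(u·τ(u)) = 1 for all u ∈ T. -/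
/-!
Write `ι (X u) = c u • X (τ u)`. Since distinct basis vectors are never proportional, applying
`ι` twice gives `τ (τ u) = u` with `c u * c (τ u) = 1`, so every `c u` is a unit; comparing
`ι (X u * X v)` with `ι (X v) * ι (X u)` gives `τ (u * v) = τ v * τ u` together with
`σ u v * c (u * v) = c v * c u * σ (τ v) (τ u)`. Everything else is algebra in `F`.
-/

theorem Module.Basis.eq_and_eq_of_smul_eq_smul {ι R M : Type*} [Semiring R] [AddCommMonoid M]
    [Module R M] (b : Module.Basis ι R M) {r s : R} {i j : ι} (hs : s ≠ 0)
    (h : r • b i = s • b j) : i = j ∧ r = s := by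
  have h' := congrArg b.repr h
  rw [map_smul, map_smul, b.repr_self, b.repr_self, Finsupp.smul_single_one,
    Finsupp.smul_single_one, Finsupp.single_eq_single_iff] at h'
  exact h'.resolve_right fun h0 => hs h0.2

namespace TwistedGroupAlgebra

variable {F T A : Type*} [CommRing F] [Ring A] [Algebra F A]
  (X : Module.Basis T F A) {τ : T → T} {ι : A →ₗ[F] A} {c : T → F}
  (hc : ∀ u, ι (X u) = c u • X (τ u))
include hc

section Involution

variable (hinv : ∀ x, ι (ι x) = x)
include hinv

theorem smul_basis_index_index (u : T) : (c u * c (τ u)) • X (τ (τ u)) = (1 : F) • X u := by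
  rw [one_smul, ← hinv (X u), hc, map_smul, hc, smul_smul]

theorem index_involutive [Nontrivial F] : Function.Involutive τ := fun u =>
  (X.eq_and_eq_of_smul_eq_smul one_ne_zero (smul_basis_index_index X hc hinv u)).1

theorem coeff_mul_coeff_index [Nontrivial F] (u : T) : c u * c (τ u) = 1 :=
  (X.eq_and_eq_of_smul_eq_smul one_ne_zero (smul_basis_index_index X hc hinv u)).2

theorem isUnit_coeff [Nontrivial F] (u : T) : IsUnit (c u) :=
  IsUnit.of_mul_eq_one _ (coeff_mul_coeff_index X hc hinv u)

end Involution

section Antimultiplicative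

variable [Mul T] (σ : T → T → Fˣ) (hX : ∀ u v, X u * X v = (σ u v : F) • X (u * v))
  (hanti : ∀ x y, ι (x * y) = ι y * ι x)
include hX hanti

theorem smul_basis_index_mul (u v : T) :
    (σ u v * c (u * v) : F) • X (τ (u * v)) =
      (c v * c u * σ (τ v) (τ u) : F) • X (τ v * τ u) :=
  calc (σ u v * c (u * v) : F) • X (τ (u * v)) = ι (X u * X v) := by
        rw [hX, map_smul, hc, smul_smul]
    _ = ι (X v) * ι (X u) := hanti _ _
    _ = (c v * c u * σ (τ v) (τ u) : F) • X (τ v * τ u) := by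
        rw [hc, hc, smul_mul_assoc, mul_smul_comm, hX, smul_smul, smul_smul]

theorem index_mul [Nontrivial F] (hunit : ∀ u, IsUnit (c u)) (u v : T) :
    τ (u * v) = τ v * τ u :=
  (X.eq_and_eq_of_smul_eq_smul (((hunit v).mul (hunit u)).mul (σ _ _).isUnit).ne_zero
    (smul_basis_index_mul X hc σ hX hanti u v)).1

theorem cocycle_mul_coeff [Nontrivial F] (hunit : ∀ u, IsUnit (c u)) (u v : T) :
    (σ u v * c (u * v) : F) = c v * c u * σ (τ v) (τ u) :=
  (X.eq_and_eq_of_smul_eq_smul (((hunit v).mul (hunit u)).mul (σ _ _).isUnit).ne_zero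
    (smul_basis_index_mul X hc σ hX hanti u v)).2

end Antimultiplicative

section Coboundary

variable [Mul T] (σ : T → T → Fˣ) (hX : ∀ u v, X u * X v = (σ u v : F) • X (u * v))
  (hanti : ∀ x y, ι (x * y) = ι y * ι x) (hinv : ∀ x, ι (ι x) = x) [Nontrivial F]
include hX hanti hinv

theorem cocycle_eq_coeff_mul_coeff_mul_coeff_index (u v : T) :
    (σ u v : F) = c u * c v * c (τ (u * v)) * σ (τ v) (τ u) := by
  linear_combination c (τ (u * v)) *
      cocycle_mul_coeff X hc σ hX hanti (isUnit_coeff X hc hinv) u v -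
    (σ u v : F) * coeff_mul_coeff_index X hc hinv (u * v)

theorem coeff_mul_index_eq_one (u : T) : c (u * τ u) = 1 := by
  have h := cocycle_mul_coeff X hc σ hX hanti (isUnit_coeff X hc hinv) u (τ u)
  rw [index_involutive X hc hinv u] at h
  refine (σ u (τ u)).isUnit.mul_left_cancel ?_
  linear_combination h + (σ u (τ u) : F) * coeff_mul_coeff_index X hc hinv u

end Coboundary

end TwistedGroupAlgebra

open TwistedGroupAlgebra

theorem homogeneous_involution_necessity_general {F : Type*} [Field F]
    {T : Type*} [Group T]
    {A : Type*} [Ring A] [Algebra F A]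
    (σ : T → T → Fˣ)
    (X : Module.Basis T F A)
    (hX : ∀ u v : T, X u * X v = (σ u v : F) • X (u * v))
    (τ : T → T)
    (ι : A →ₗ[F] A)
    (hanti : ∀ x y : A, ι (x * y) = ι y * ι x)
    (hinv : ∀ x : A, ι (ι x) = x)
    (hhom : ∀ u : T, ∃ c : F, ι (X u) = c • X (τ u)) :
    Function.Bijective τ ∧ (∀ u v : T, τ (u * v) = τ v * τ u) ∧ τ ∘ τ = id ∧
      ∃ μ : T → Fˣ,
        (∀ u : T, ι (X u) = (μ u : F) • X (τ u)) ∧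
        (∀ u v : T, σ u v = μ u * μ v * (μ (u * v))⁻¹ * σ (τ v) (τ u)) ∧
        (∀ u : T, μ (u * τ u) = 1) := by
  choose c hc using hhom
  have hτ := index_involutive X hc hinv
  let μ : T → Fˣ := fun u => Units.mkOfMulEqOne _ _ (coeff_mul_coeff_index X hc hinv u)
  have hμ_inv : ∀ u, (μ u)⁻¹ = μ (τ u) := fun u => by
    rw [inv_eq_iff_mul_eq_one]
    ext
    exact coeff_mul_coeff_index X hc hinv u
  refine ⟨hτ.bijective, index_mul X hc σ hX hanti (isUnit_coeff X hc hinv), hτ.comp_self,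
    μ, hc, fun u v => ?_, fun u => Units.ext (coeff_mul_index_eq_one X hc σ hX hanti hinv u)⟩
  rw [hμ_inv]
  exact Units.ext (cocycle_eq_coeff_mul_coeff_mul_coeff_index X hc σ hX hanti hinv u v)

/-- If ι is an F-linear involution of the twisted group algebra F^σT with
ι(X_u) ∈ F • X_{τ(u)} for all u, then τ is an anti-automorphism of T of order
dividing 2, and there is μ : T → Fˣ with ι(X_u) = μ(u) • X_{τ(u)}, witnessing
that the pair (σ,τ) is compatible. -/
theorem homogeneous_involution_necessity {F : Type*} [Field F]
    (hchar : (2 : F) ≠ 0)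
    {T : Type*} [Group T] [Fintype T]
    {A : Type*} [Ring A] [Algebra F A]
    (σ : T → T → Fˣ)
    (hσ : ∀ u v w : T, σ u v * σ (u * v) w = σ u (v * w) * σ v w)
    (X : Module.Basis T F A)
    (hX : ∀ u v : T, X u * X v = (σ u v : F) • X (u * v))
    (τ : T → T)
    (ι : A →ₗ[F] A)
    (hanti : ∀ x y : A, ι (x * y) = ι y * ι x)
    (hinv : ∀ x : A, ι (ι x) = x)
    (hhom : ∀ u : T, ∃ c : F, ι (X u) = c • X (τ u)) :
    Function.Bijective τ ∧ (∀ u v : T, τ (u * v) = τ v * τ u) ∧ τ ∘ τ = id ∧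
      ∃ μ : T → Fˣ,
        (∀ u : T, ι (X u) = (μ u : F) • X (τ u)) ∧
        (∀ u v : T, σ u v = μ u * μ v * (μ (u * v))⁻¹ * σ (τ v) (τ u)) ∧
        (∀ u : T, μ (u * τ u) = 1) :=
  homogeneous_involution_necessity_general σ X hX τ ι hanti hinv hhom
end

section
/- Let F be a field of characteristic zero, T a finite group, σ : T × T → Fˣ a 2-cocycle, A a twisted group algebra F^σT with basis (X_u)_{u∈T}, τ : T → T an anti-automorphism with τ∘τ = id, μ : T → Fˣ, and ι : A → A the F-linear involution with ι(X_u) = μ(u) • X_{τ(u)}. For m ≥ 1 and s : Fin m → T, let P_s ⊆ A be the span of { X_{s(π(1))}·⋯·X_{s(π(m))} : π a permutation of Fin m } and let D_s ⊆ A be the span of { ι^{j(1)}(X_{s(π(1))})·⋯·ι^{j(m)}(X_{s(π(m))}) : π a permutation of Fin m, j : Fin m → {0,1} } (where ι^0 = id, ι^1 = ι). Then for every m: Σ_{s : Fin m → T} dim P_s ≤ Σ_{s : Fin m → T} dim D_s ≤ |T| · Σ_{s : Fin m → T} dim P_s. -/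
/-- The span of the permuted products of the X_{s i}. -/
def Pspan (F : Type*) [Field F] {T : Type*} [Group T]
    {A : Type*} [Ring A] [Algebra F A] (X : T → A)
    (m : ℕ) (s : Fin m → T) : Submodule F A :=
  Submodule.span F
    { a : A | ∃ π : Equiv.Perm (Fin m), a = (List.ofFn fun i => X (s (π i))).prod }

/-- The span of the permuted products of the ι^{j i}(X_{s i}). -/
def Dspan (F : Type*) [Field F] {T : Type*} [Group T]
    {A : Type*} [Ring A] [Algebra F A] (X : T → A) (ι : A →ₗ[F] A)
    (m : ℕ) (s : Fin m → T) : Submodule F A :=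
  Submodule.span F
    { a : A | ∃ (π : Equiv.Perm (Fin m)) (j : Fin m → Bool),
        a = (List.ofFn fun i => if j i then ι (X (s (π i))) else X (s (π i))).prod }

/-!
Every product `X_{u₁} ⋯ X_{uₘ}` in a twisted group algebra is a nonzero multiple of
`X_{u₁⋯uₘ}`, so each `P_s` is nonzero and `dim P_s ≥ 1`; on the other hand `P_s ⊆ D_s ⊆ A`
and `dim A = |T|`. Hence `dim P_s ≤ dim D_s ≤ |T| ≤ |T| · dim P_s` for every `s`.
-/

section TwistedGroupAlgebra

variable {F : Type*} [Field F] {T : Type*} [Group T] {A : Type*} [Ring A] [Algebra F A]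

theorem prod_map_basis_eq_unit_smul (σ : T → T → Fˣ) (X : Module.Basis T F A)
    (hX : ∀ u v : T, X u * X v = (σ u v : F) • X (u * v)) (l : List T) (hl : l ≠ []) :
    ∃ c : Fˣ, (l.map X).prod = (c : F) • X l.prod := by
  induction l with
  | nil => exact absurd rfl hl
  | cons u l ih =>
    rcases eq_or_ne l [] with rfl | hne
    · exact ⟨1, by simp⟩
    · obtain ⟨c, hc⟩ := ih hne
      refine ⟨σ u l.prod * c, ?_⟩
      rw [List.map_cons, List.prod_cons, hc, mul_smul_comm, hX, smul_smul, List.prod_cons]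
      congr 1
      push_cast
      ring

theorem prod_map_basis_ne_zero (σ : T → T → Fˣ) (X : Module.Basis T F A)
    (hX : ∀ u v : T, X u * X v = (σ u v : F) • X (u * v)) (l : List T) :
    (l.map X).prod ≠ 0 := by
  rcases eq_or_ne l [] with rfl | hl
  · have : Nontrivial A := nontrivial_of_ne _ _ (X.ne_zero 1)
    simp
  · obtain ⟨c, hc⟩ := prod_map_basis_eq_unit_smul σ X hX l hl
    rw [hc]
    exact smul_ne_zero c.ne_zero (X.ne_zero _)

theorem Pspan_le_Dspan (X : T → A) (ι : A →ₗ[F] A) (m : ℕ) (s : Fin m → T) :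
    Pspan F X m s ≤ Dspan F X ι m s := by
  refine Submodule.span_mono ?_
  rintro a ⟨π, rfl⟩
  exact ⟨π, fun _ => false, by simp⟩

theorem finrank_Pspan_pos [Finite T] (σ : T → T → Fˣ) (X : Module.Basis T F A)
    (hX : ∀ u v : T, X u * X v = (σ u v : F) • X (u * v)) (m : ℕ) (s : Fin m → T) :
    0 < Module.finrank F (Pspan F X m s) := by
  have hmem : ((List.ofFn s).map X).prod ∈ Pspan F X m s :=
    Submodule.subset_span ⟨Equiv.refl _, by rw [List.map_ofFn]; rfl⟩
  have hP : Pspan F X m s ≠ ⊥ := fun h => by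
    rw [h, Submodule.mem_bot] at hmem
    exact prod_map_basis_ne_zero σ X hX _ hmem
  have : Module.Finite F A := Module.Finite.of_basis X
  exact Module.finrank_pos_iff.mpr (Submodule.nontrivial_iff_ne_bot.mpr hP)

theorem finrank_Dspan_le_card [Fintype T] (X : Module.Basis T F A) (ι : A →ₗ[F] A)
    (m : ℕ) (s : Fin m → T) : Module.finrank F (Dspan F X ι m s) ≤ Fintype.card T := by
  have : Module.Finite F A := Module.Finite.of_basis X
  exact (Submodule.finrank_le _).trans_eq (Module.finrank_eq_card_basis X)

end TwistedGroupAlgebra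

theorem graded_involution_codim_bounds_general {F : Type*} [Field F]
    {T : Type*} [Group T] [Fintype T]
    {A : Type*} [Ring A] [Algebra F A]
    (σ : T → T → Fˣ)
    (X : Module.Basis T F A)
    (hX : ∀ u v : T, X u * X v = (σ u v : F) • X (u * v))
    (ι : A →ₗ[F] A)
    (m : ℕ) :
    (∑ s : Fin m → T, Module.finrank F (Pspan F (X ·) m s)) ≤
        (∑ s : Fin m → T, Module.finrank F (Dspan F (X ·) ι m s)) ∧
      (∑ s : Fin m → T, Module.finrank F (Dspan F (X ·) ι m s)) ≤
        Fintype.card T * ∑ s : Fin m → T, Module.finrank F (Pspan F (X ·) m s) := by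
  have : Module.Finite F A := Module.Finite.of_basis X
  refine ⟨Finset.sum_le_sum fun s _ => Submodule.finrank_mono (Pspan_le_Dspan X ι m s), ?_⟩
  rw [Finset.mul_sum]
  refine Finset.sum_le_sum fun s _ => ?_
  calc Module.finrank F (Dspan F (X ·) ι m s) ≤ Fintype.card T := finrank_Dspan_le_card X ι m s
    _ ≤ Fintype.card T * Module.finrank F (Pspan F (X ·) m s) :=
      Nat.le_mul_of_pos_right _ (finrank_Pspan_pos σ X hX m s)

/-- The graded codimension sequence and the graded-involution codimension
sequence of a twisted group algebra with a homogeneous involution satisfy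
c_m^T ≤ c_m^{T,ι} ≤ |T| · c_m^T. -/
theorem graded_involution_codim_bounds {F : Type*} [Field F] [CharZero F]
    {T : Type*} [Group T] [Fintype T]
    {A : Type*} [Ring A] [Algebra F A]
    (σ : T → T → Fˣ)
    (hσ : ∀ u v w : T, σ u v * σ (u * v) w = σ u (v * w) * σ v w)
    (X : Module.Basis T F A)
    (hX : ∀ u v : T, X u * X v = (σ u v : F) • X (u * v))
    (τ : T → T) (hτanti : ∀ u v : T, τ (u * v) = τ v * τ u)
    (hτ2 : τ ∘ τ = id)
    (μ : T → Fˣ)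
    (ι : A →ₗ[F] A)
    (hι : ∀ u : T, ι (X u) = (μ u : F) • X (τ u))
    (hanti : ∀ x y : A, ι (x * y) = ι y * ι x)
    (hinv : ∀ x : A, ι (ι x) = x)
    (m : ℕ) (hm : 1 ≤ m) :
    (∑ s : Fin m → T, Module.finrank F (Pspan F (X ·) m s)) ≤
        (∑ s : Fin m → T, Module.finrank F (Dspan F (X ·) ι m s)) ∧
      (∑ s : Fin m → T, Module.finrank F (Dspan F (X ·) ι m s)) ≤
        Fintype.card T * ∑ s : Fin m → T, Module.finrank F (Pspan F (X ·) m s) :=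
  graded_involution_codim_bounds_general σ X hX ι m
end

section
/- Let F be a field of characteristic zero, T a finite group, σ : T × T → Fˣ a 2-cocycle, A a twisted group algebra F^σT with basis (X_u)_{u∈T}, τ : T → T an anti-automorphism with τ∘τ = id, μ : T → Fˣ, and ι : A → A the F-linear involution with ι(X_u) = μ(u) • X_{τ(u)}. For m ≥ 1 and s : Fin m → T, let D_s ⊆ A be the span of { ι^{j(1)}(X_{s(π(1))})·⋯·ι^{j(m)}(X_{s(π(m))}) : π a permutation of Fin m, j : Fin m → {0,1} } (where ι^0 = id, ι^1 = ι). Then for every m: |T|^m ≤ Σ_{s : Fin m → T} dim D_s ≤ |[T,T]| · |T|^{m+1}, where [T,T] is the commutator subgroup of T. -/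
section TwistedProduct

variable {F : Type*} [Field F] {T : Type*} [Monoid T] {A : Type*} [Ring A] [Algebra F A]
  (σ : T → T → Fˣ)

theorem exists_units_smul_mul_list_prod_map (X : T → A)
    (hX : ∀ u v : T, X u * X v = (σ u v : F) • X (u * v)) (l : List T) (t : T) :
    ∃ c : Fˣ, X t * (l.map X).prod = (c : F) • X (t * l.prod) := by
  induction l generalizing t with
  | nil => exact ⟨1, by simp⟩
  | cons a l ih =>
    obtain ⟨c, hc⟩ := ih (t * a)
    refine ⟨σ t a * c, ?_⟩
    rw [List.map_cons, List.prod_cons, ← mul_assoc, hX, smul_mul_assoc, hc, smul_smul,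
      List.prod_cons, mul_assoc, Units.val_mul]

theorem list_prod_map_basis_ne_zero (X : Module.Basis T F A)
    (hX : ∀ u v : T, X u * X v = (σ u v : F) • X (u * v)) (l : List T) :
    (l.map X).prod ≠ 0 := by
  cases l with
  | nil =>
    have : Nontrivial A := nontrivial_of_ne (X 1) 0 (X.ne_zero 1)
    exact one_ne_zero
  | cons t l =>
    obtain ⟨c, hc⟩ := exists_units_smul_mul_list_prod_map σ X hX l t
    rw [List.map_cons, List.prod_cons, hc]
    exact smul_ne_zero c.ne_zero (X.ne_zero _)

end TwistedProduct

theorem Dspan_ne_bot {F : Type*} [Field F] {T : Type*} [Group T]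
    {A : Type*} [Ring A] [Algebra F A] (σ : T → T → Fˣ) (X : Module.Basis T F A)
    (hX : ∀ u v : T, X u * X v = (σ u v : F) • X (u * v)) (ι : A →ₗ[F] A)
    {m : ℕ} (s : Fin m → T) : Dspan F X ι m s ≠ ⊥ := by
  refine (Submodule.ne_bot_iff _).2
    ⟨((List.ofFn s).map X).prod, Submodule.subset_span ⟨1, fun _ => false, ?_⟩,
      list_prod_map_basis_ne_zero σ X hX _⟩
  simp [List.map_ofFn, Function.comp_def]

theorem graded_involution_codim_estimates_general {F : Type*} [Field F]
    {T : Type*} [Group T] [Fintype T]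
    {A : Type*} [Ring A] [Algebra F A]
    (σ : T → T → Fˣ)
    (X : Module.Basis T F A)
    (hX : ∀ u v : T, X u * X v = (σ u v : F) • X (u * v))
    (ι : A →ₗ[F] A)
    (m : ℕ) :
    Fintype.card T ^ m ≤
        (∑ s : Fin m → T, Module.finrank F (Dspan F (X ·) ι m s)) ∧
      (∑ s : Fin m → T, Module.finrank F (Dspan F (X ·) ι m s)) ≤
        Nat.card (commutator T) * Fintype.card T ^ (m + 1) := by
  have : Module.Finite F A := Module.Finite.of_basis X
  constructor
  · calc Fintype.card T ^ m = ∑ _s : Fin m → T, 1 := by simp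
      _ ≤ _ := Finset.sum_le_sum fun s _ =>
          Submodule.one_le_finrank_iff.2 (Dspan_ne_bot σ X hX ι s)
  · calc _ ≤ ∑ _s : Fin m → T, Module.finrank F A :=
          Finset.sum_le_sum fun s _ => Submodule.finrank_le _
      _ = Fintype.card T ^ (m + 1) := by simp [Module.finrank_eq_card_basis X, pow_succ]
      _ ≤ Nat.card (commutator T) * Fintype.card T ^ (m + 1) :=
          Nat.le_mul_of_pos_left _ Nat.card_pos

/-- The graded-involution codimension sequence of a twisted group algebra with
a homogeneous involution satisfies |T|^m ≤ c_m^{T,ι} ≤ |[T,T]| · |T|^{m+1}. -/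
theorem graded_involution_codim_estimates {F : Type*} [Field F] [CharZero F]
    {T : Type*} [Group T] [Fintype T]
    {A : Type*} [Ring A] [Algebra F A]
    (σ : T → T → Fˣ)
    (hσ : ∀ u v w : T, σ u v * σ (u * v) w = σ u (v * w) * σ v w)
    (X : Module.Basis T F A)
    (hX : ∀ u v : T, X u * X v = (σ u v : F) • X (u * v))
    (τ : T → T) (hτanti : ∀ u v : T, τ (u * v) = τ v * τ u)
    (hτ2 : τ ∘ τ = id)
    (μ : T → Fˣ)
    (ι : A →ₗ[F] A)
    (hι : ∀ u : T, ι (X u) = (μ u : F) • X (τ u))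
    (hanti : ∀ x y : A, ι (x * y) = ι y * ι x)
    (hinv : ∀ x : A, ι (ι x) = x)
    (m : ℕ) (hm : 1 ≤ m) :
    Fintype.card T ^ m ≤
        (∑ s : Fin m → T, Module.finrank F (Dspan F (X ·) ι m s)) ∧
      (∑ s : Fin m → T, Module.finrank F (Dspan F (X ·) ι m s)) ≤
        Nat.card (commutator T) * Fintype.card T ^ (m + 1) :=
  graded_involution_codim_estimates_general σ X hX ι m
end

section
/- Let F be a field of characteristic zero, T a finite abelian group, σ : T × T → Fˣ a 2-cocycle, A a twisted group algebra F^σT with basis (X_u)_{u∈T}, μ : T → Fˣ, and ι : A → A an F-linear involution with ι(X_u) = μ(u) • X_u for all u ∈ T (a degree-preserving involution). For m ≥ 1 and s : Fin m → T, let P_s ⊆ A be the span of { X_{s(π(1))}·⋯·X_{s(π(m))} : π a permutation of Fin m } and D_s ⊆ A the span of { ι^{j(1)}(X_{s(π(1))})·⋯·ι^{j(m)}(X_{s(π(m))}) : π a permutation of Fin m, j : Fin m → {0,1} } (ι^0 = id, ι^1 = ι). Then for every m: Σ_{s : Fin m → T} dim D_s = Σ_{s : Fin m → T} dim P_s = |T|^m.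 -/
/-!
Multiplying unit multiples of basis vectors multiplies their indices, and the empty product is one
of them as well: the cocycle identity forces `σ u 1 = σ 1 1`, so `X 1` acts on the right as the
scalar `σ 1 1` and `1 = (σ 1 1)⁻¹ • X 1`. A degree-preserving involution only rescales each `X u`,
and since `T` is abelian the product of the indices does not depend on the order of the factors.
Hence `P_s` and `D_s` are both the line spanned by `X (∏ i, s i)`, and each of the `|T| ^ m`
summands equals `1`.
-/

open Module

section TwistedGroupAlgebra

variable {F : Type*} [Field F] {T : Type*} [Monoid T] {A : Type*} [Ring A] [Algebra F A]
  {σ : T → T → Fˣ} {X : Basis T F A}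

theorem cocycle_apply_one_right (hσ : ∀ u v w : T, σ u v * σ (u * v) w = σ u (v * w) * σ v w)
    (u : T) : σ u 1 = σ 1 1 := by
  simpa using hσ u 1 1

theorem mul_basis_one (hσ : ∀ u v w : T, σ u v * σ (u * v) w = σ u (v * w) * σ v w)
    (hX : ∀ u v : T, X u * X v = (σ u v : F) • X (u * v)) (x : A) :
    x * X 1 = (σ 1 1 : F) • x := by
  have : LinearMap.mulRight F (X 1) = (σ 1 1 : F) • LinearMap.id :=
    X.ext fun u => by simp [hX, cocycle_apply_one_right hσ]
  exact LinearMap.congr_fun this x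

theorem one_eq_smul_basis_one (hσ : ∀ u v w : T, σ u v * σ (u * v) w = σ u (v * w) * σ v w)
    (hX : ∀ u v : T, X u * X v = (σ u v : F) • X (u * v)) :
    (1 : A) = (σ 1 1 : F)⁻¹ • X 1 := by
  rw [← one_mul (X 1), mul_basis_one hσ hX, smul_smul, inv_mul_cancel₀ (σ 1 1).ne_zero, one_smul]

theorem exists_prod_ofFn_eq_smul_basis
    (hσ : ∀ u v w : T, σ u v * σ (u * v) w = σ u (v * w) * σ v w)
    (hX : ∀ u v : T, X u * X v = (σ u v : F) • X (u * v)) :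
    ∀ {m : ℕ} (f : Fin m → A) (t : Fin m → T), (∀ i, ∃ c : Fˣ, f i = (c : F) • X (t i)) →
      ∃ c : Fˣ, (List.ofFn f).prod = (c : F) • X (List.ofFn t).prod
  | 0, _, _, _ => ⟨(σ 1 1)⁻¹, by simpa using one_eq_smul_basis_one hσ hX⟩
  | _ + 1, f, t, hf => by
    obtain ⟨c₀, hc₀⟩ := hf 0
    obtain ⟨c, hc⟩ := exists_prod_ofFn_eq_smul_basis hσ hX (Fin.tail f) (Fin.tail t)
      fun i => hf i.succ
    refine ⟨c₀ * c * σ (t 0) (List.ofFn (Fin.tail t)).prod, ?_⟩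
    rw [List.ofFn_succ, List.ofFn_succ, List.prod_cons, List.prod_cons]
    change f 0 * (List.ofFn (Fin.tail f)).prod = _
    rw [hc₀, hc, smul_mul_smul_comm, hX, smul_smul]
    rfl

end TwistedGroupAlgebra

theorem Submodule.span_eq_span_singleton_of_forall_exists_smul {K V : Type*} [Field K]
    [AddCommGroup V] [Module K V] {S : Set V} {v : V} (hS : ∀ a ∈ S, ∃ c : Kˣ, a = (c : K) • v)
    {a : V} (ha : a ∈ S) : Submodule.span K S = Submodule.span K {v} := by
  refine le_antisymm (Submodule.span_le.2 fun b hb => ?_) ?_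
  · obtain ⟨c, rfl⟩ := hS b hb
    exact Submodule.smul_mem _ _ (Submodule.mem_span_singleton_self v)
  · obtain ⟨c, rfl⟩ := hS a ha
    rw [Submodule.span_singleton_le_iff_mem, ← inv_smul_smul c v]
    exact Submodule.smul_mem _ _ (Submodule.subset_span ha)

theorem prod_ofFn_comp_perm {T : Type*} [CommMonoid T] {m : ℕ} (s : Fin m → T)
    (π : Equiv.Perm (Fin m)) : (List.ofFn fun i => s (π i)).prod = ∏ i, s i := by
  rw [List.prod_ofFn]
  exact Equiv.prod_comp π s

section AbelianTwistedGroupAlgebra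

variable {F : Type*} [Field F] {T : Type*} [CommGroup T] {A : Type*} [Ring A] [Algebra F A]
  {σ : T → T → Fˣ} {X : Basis T F A}

theorem Pspan_eq_span_basis_prod
    (hσ : ∀ u v w : T, σ u v * σ (u * v) w = σ u (v * w) * σ v w)
    (hX : ∀ u v : T, X u * X v = (σ u v : F) • X (u * v)) (m : ℕ) (s : Fin m → T) :
    Pspan F (X ·) m s = Submodule.span F {X (∏ i, s i)} := by
  refine Submodule.span_eq_span_singleton_of_forall_exists_smul ?_ ⟨1, rfl⟩
  rintro a ⟨π, rfl⟩
  rw [← prod_ofFn_comp_perm s π]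
  exact exists_prod_ofFn_eq_smul_basis hσ hX _ _ fun i => ⟨1, (one_smul F _).symm⟩

theorem Dspan_eq_span_basis_prod
    (hσ : ∀ u v w : T, σ u v * σ (u * v) w = σ u (v * w) * σ v w)
    (hX : ∀ u v : T, X u * X v = (σ u v : F) • X (u * v)) {μ : T → Fˣ} {ι : A →ₗ[F] A}
    (hι : ∀ u : T, ι (X u) = (μ u : F) • X u) (m : ℕ) (s : Fin m → T) :
    Dspan F (X ·) ι m s = Submodule.span F {X (∏ i, s i)} := by
  refine Submodule.span_eq_span_singleton_of_forall_exists_smul ?_ ⟨1, fun _ => false, rfl⟩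
  rintro a ⟨π, j, rfl⟩
  rw [← prod_ofFn_comp_perm s π]
  refine exists_prod_ofFn_eq_smul_basis hσ hX _ _ fun i => ?_
  cases j i
  · exact ⟨1, (one_smul F _).symm⟩
  · exact ⟨μ _, hι _⟩

end AbelianTwistedGroupAlgebra

theorem abelian_codim_exact_general {F : Type*} [Field F]
    {T : Type*} [CommGroup T] [Fintype T]
    {A : Type*} [Ring A] [Algebra F A]
    (σ : T → T → Fˣ)
    (hσ : ∀ u v w : T, σ u v * σ (u * v) w = σ u (v * w) * σ v w)
    (X : Module.Basis T F A)
    (hX : ∀ u v : T, X u * X v = (σ u v : F) • X (u * v))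
    (μ : T → Fˣ)
    (ι : A →ₗ[F] A)
    (hι : ∀ u : T, ι (X u) = (μ u : F) • X u)
    (m : ℕ) :
    (∑ s : Fin m → T, Module.finrank F (Dspan F (X ·) ι m s)) =
        (∑ s : Fin m → T, Module.finrank F (Pspan F (X ·) m s)) ∧
      (∑ s : Fin m → T, Module.finrank F (Pspan F (X ·) m s)) =
        Fintype.card T ^ m := by
  have hrank : ∀ s : Fin m → T, Module.finrank F (Pspan F (X ·) m s) = 1 := fun s => by
    rw [Pspan_eq_span_basis_prod hσ hX, finrank_span_singleton (X.ne_zero _)]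
  refine ⟨Finset.sum_congr rfl fun s _ => ?_, ?_⟩
  · rw [Dspan_eq_span_basis_prod hσ hX hι, Pspan_eq_span_basis_prod hσ hX]
  · simp [hrank]

/-- For a finite abelian group T and a degree-preserving involution ι on the
twisted group algebra F^σT, the graded-involution codimension equals the graded
codimension and both equal |T|^m. -/
theorem abelian_codim_exact {F : Type*} [Field F] [CharZero F]
    {T : Type*} [CommGroup T] [Fintype T]
    {A : Type*} [Ring A] [Algebra F A]
    (σ : T → T → Fˣ)
    (hσ : ∀ u v w : T, σ u v * σ (u * v) w = σ u (v * w) * σ v w)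
    (X : Module.Basis T F A)
    (hX : ∀ u v : T, X u * X v = (σ u v : F) • X (u * v))
    (μ : T → Fˣ)
    (ι : A →ₗ[F] A)
    (hι : ∀ u : T, ι (X u) = (μ u : F) • X u)
    (hanti : ∀ x y : A, ι (x * y) = ι y * ι x)
    (hinv : ∀ x : A, ι (ι x) = x)
    (m : ℕ) (hm : 1 ≤ m) :
    (∑ s : Fin m → T, Module.finrank F (Dspan F (X ·) ι m s)) =
        (∑ s : Fin m → T, Module.finrank F (Pspan F (X ·) m s)) ∧
      (∑ s : Fin m → T, Module.finrank F (Pspan F (X ·) m s)) =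
        Fintype.card T ^ m :=
  abelian_codim_exact_general σ hσ X hX μ ι hι m
end
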